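/- arXiv:2407.00170 — 3 statements merged into one kernel-verified Lean document; each statement's English description precedes it below -/
import Mathlib

section
/- If −δ ≤ √(2/π)·(σ_0/√n_0 − σ_1/√n_1) ≤ δ with n_0, n_1 > 0, σ_0, σ_1 > 0, and δ ≥ 0, then n_1·(σ_0/(δ√(π n_1/2) + σ_1))² ≤ n_0. -/
/-- Bounded unfairness implies a lower bound on `n₀` (Theorem 3, first
inequality). -/
theorem fairness_sample_bound_one (n0 n1 σ0 σ1 δ : ℝ)
    (hn0 : 0 < n0) (hn1 : 0 < n1) (hσ0 : 0 < σ0) (hσ1 : 0 < σ1) (hδ : 0 ≤ δ)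
    (hlb : -δ ≤ Real.sqrt (2 / Real.pi)
        * (σ0 / Real.sqrt n0 - σ1 / Real.sqrt n1))
    (hub : Real.sqrt (2 / Real.pi)
        * (σ0 / Real.sqrt n0 - σ1 / Real.sqrt n1) ≤ δ) :
    n1 * (σ0 / (δ * Real.sqrt (Real.pi * n1 / 2) + σ1)) ^ 2 ≤ n0 := by
  have hπ : 0 < Real.pi := Real.pi_pos
  have hc : 0 < Real.sqrt (2 / Real.pi) := Real.sqrt_pos.2 (by positivity)
  have hs0 : 0 < Real.sqrt n0 := Real.sqrt_pos.2 hn0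
  have hs1 : 0 < Real.sqrt n1 := Real.sqrt_pos.2 hn1
  set A := δ * Real.sqrt (Real.pi * n1 / 2) + σ1 with hAdef
  have hA : 0 < A := by positivity
  -- step 1: σ0/√n0 - σ1/√n1 ≤ δ * √(π/2)
  have h1 : σ0 / Real.sqrt n0 - σ1 / Real.sqrt n1 ≤ δ * Real.sqrt (Real.pi / 2) := by
    have h2 : σ0 / Real.sqrt n0 - σ1 / Real.sqrt n1 ≤ δ / Real.sqrt (2 / Real.pi) :=
      (le_div_iff₀' hc).2 hub
    have h3 : δ / Real.sqrt (2 / Real.pi) = δ * Real.sqrt (Real.pi / 2) := by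
      rw [div_eq_mul_inv, ← Real.sqrt_inv, inv_div]
    linarith [h3 ▸ h2]
  -- step 2: √(π*n1/2) = √(π/2) * √n1
  have hsplit : Real.sqrt (Real.pi * n1 / 2) = Real.sqrt (Real.pi / 2) * Real.sqrt n1 := by
    rw [← Real.sqrt_mul (by positivity : (0:ℝ) ≤ Real.pi / 2)]
    ring_nf
  -- step 3: σ0/√n0 ≤ A/√n1
  have h4 : σ0 / Real.sqrt n0 ≤ A / Real.sqrt n1 := by
    rw [hAdef, hsplit]
    have : (δ * (Real.sqrt (Real.pi / 2) * Real.sqrt n1) + σ1) / Real.sqrt n1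
        = δ * Real.sqrt (Real.pi / 2) + σ1 / Real.sqrt n1 := by
      field_simp
    rw [this]; linarith
  -- step 4: σ0 * √n1 ≤ A * √n0
  have h5 : σ0 * Real.sqrt n1 ≤ A * Real.sqrt n0 := by
    rw [div_le_div_iff₀ hs0 hs1] at h4
    linarith [h4]
  -- square
  have h6 : (σ0 * Real.sqrt n1) ^ 2 ≤ (A * Real.sqrt n0) ^ 2 := by
    apply sq_le_sq' _ h5
    nlinarith [mul_pos hσ0 hs1]
  have hsq0 : Real.sqrt n0 ^ 2 = n0 := Real.sq_sqrt hn0.le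
  have hsq1 : Real.sqrt n1 ^ 2 = n1 := Real.sq_sqrt hn1.le
  have h7 : σ0 ^ 2 * n1 ≤ A ^ 2 * n0 := by
    nlinarith [h6]
  rw [div_pow]
  rw [mul_div_assoc', div_le_iff₀ (by positivity : (0:ℝ) < A ^ 2)]
  nlinarith [h7]
end

section
/- If −δ ≤ √(2/π)·(σ_0/√n_0 − σ_1/√n_1) ≤ δ with n_0, n_1 > 0, σ_0, σ_1 > 0, δ ≥ 0, then n_0·(σ_1/(δ√(π n_0/2) + σ_0))² ≤ n_1. -/
/-- Bounded unfairness implies a lower bound on `n₁` (Theorem 3, second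
inequality). -/
theorem fairness_sample_bound_two (n0 n1 σ0 σ1 δ : ℝ)
    (hn0 : 0 < n0) (hn1 : 0 < n1) (hσ0 : 0 < σ0) (hσ1 : 0 < σ1) (hδ : 0 ≤ δ)
    (hlb : -δ ≤ Real.sqrt (2 / Real.pi)
        * (σ0 / Real.sqrt n0 - σ1 / Real.sqrt n1))
    (hub : Real.sqrt (2 / Real.pi)
        * (σ0 / Real.sqrt n0 - σ1 / Real.sqrt n1) ≤ δ) :
    n0 * (σ1 / (δ * Real.sqrt (Real.pi * n0 / 2) + σ0)) ^ 2 ≤ n1 := by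
  have hπ := Real.pi_pos
  have hs0 : 0 < Real.sqrt n0 := Real.sqrt_pos.mpr hn0
  have hs1 : 0 < Real.sqrt n1 := Real.sqrt_pos.mpr hn1
  have hc : 0 < Real.sqrt (2 / Real.pi) := Real.sqrt_pos.mpr (by positivity)
  have h1 : σ1 / Real.sqrt n1 ≤ σ0 / Real.sqrt n0 + δ / Real.sqrt (2 / Real.pi) := by
    rw [← sub_le_iff_le_add', le_div_iff₀ hc]
    nlinarith [hlb]
  have hinv : δ / Real.sqrt (2 / Real.pi) = δ * Real.sqrt (Real.pi / 2) := by
    rw [div_eq_mul_inv, ← Real.sqrt_inv]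
    norm_num
  rw [hinv] at h1
  have hsp2 : Real.sqrt (Real.pi / 2) * Real.sqrt n0 = Real.sqrt (Real.pi * n0 / 2) := by
    rw [← Real.sqrt_mul (by positivity)]
    ring_nf
  set D := δ * Real.sqrt (Real.pi * n0 / 2) + σ0 with hD
  have hsq : 0 ≤ Real.sqrt (Real.pi * n0 / 2) := Real.sqrt_nonneg _
  have hDpos : 0 < D := by positivity
  have key : σ1 * Real.sqrt n0 ≤ Real.sqrt n1 * D := by
    have h2 : σ1 ≤ (σ0 / Real.sqrt n0 + δ * Real.sqrt (Real.pi / 2)) * Real.sqrt n1 := by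
      rw [← div_le_iff₀ hs1] at *
      linarith
    have h3 : (σ0 / Real.sqrt n0) * Real.sqrt n0 = σ0 := div_mul_cancel₀ _ hs0.ne'
    calc σ1 * Real.sqrt n0
        ≤ ((σ0 / Real.sqrt n0 + δ * Real.sqrt (Real.pi / 2)) * Real.sqrt n1) * Real.sqrt n0 := by
          exact mul_le_mul_of_nonneg_right h2 hs0.le
      _ = Real.sqrt n1 * D := by
          rw [hD, ← hsp2]
          nlinarith [h3]
  have keysq : (σ1 * Real.sqrt n0) ^ 2 ≤ (Real.sqrt n1 * D) ^ 2 := by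
    apply pow_le_pow_left₀ (by positivity) key
  have e0 : Real.sqrt n0 ^ 2 = n0 := Real.sq_sqrt hn0.le
  have e1 : Real.sqrt n1 ^ 2 = n1 := Real.sq_sqrt hn1.le
  have main : n0 * σ1 ^ 2 ≤ n1 * D ^ 2 := by nlinarith [keysq]
  rw [div_pow, mul_div_assoc']
  rw [div_le_iff₀ (by positivity)]
  nlinarith [main]
end

section
/- Suppose two groups appear in the true population in equal proportion, but zero unfairness requires n_0 = (σ_0²/σ_1²)·n_1 with σ_0 ≠ σ_1. Then for the zero-unfairness allocation with n_0 + n_1 = m, the dataset's representativeness distance |n_0/m − 1/2| equals |σ_0² − σ_1²|/(2(σ_0² + σ_1²)) > 0. -/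
/-- For the zero-unfairness allocation `n₀ = (σ₀²/σ₁²) n₁` under budget
`m = n₀ + n₁`, the representativeness distance to equal proportions is
`|σ₀² − σ₁²| / (2(σ₀² + σ₁²)) > 0`. -/
theorem fair_allocation_not_representative (n0 n1 m σ0 σ1 : ℝ)
    (hn0 : 0 < n0) (hn1 : 0 < n1) (hσ0 : 0 < σ0) (hσ1 : 0 < σ1)
    (hne : σ0 ≠ σ1) (hm : n0 + n1 = m)
    (hfair : n0 = (σ0 ^ 2 / σ1 ^ 2) * n1) :
    |n0 / m - 1 / 2| = |σ0 ^ 2 - σ1 ^ 2| / (2 * (σ0 ^ 2 + σ1 ^ 2))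
      ∧ 0 < |n0 / m - 1 / 2| := by
  have hs0 : (0:ℝ) < σ0 ^ 2 := by positivity
  have hs1 : (0:ℝ) < σ1 ^ 2 := by positivity
  have hsum : (0:ℝ) < σ0 ^ 2 + σ1 ^ 2 := by positivity
  have hm0 : 0 < m := by rw [← hm]; linarith
  have hkey : n0 / m - 1 / 2 = (σ0 ^ 2 - σ1 ^ 2) / (2 * (σ0 ^ 2 + σ1 ^ 2)) := by
    subst hm
    rw [hfair]
    field_simp
    ring
  have hne2 : σ0 ^ 2 - σ1 ^ 2 ≠ 0 := by
    intro h
    exact hne (by nlinarith)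
  constructor
  · rw [hkey, abs_div, abs_of_pos (by positivity : (0:ℝ) < 2 * (σ0 ^ 2 + σ1 ^ 2))]
  · rw [hkey]
    have : |σ0 ^ 2 - σ1 ^ 2| > 0 := abs_pos.mpr hne2
    rw [abs_div, abs_of_pos (by positivity : (0:ℝ) < 2 * (σ0 ^ 2 + σ1 ^ 2))]
    positivity
end
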